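/- arXiv:1912.07422 — 4 statements merged into one kernel-verified Lean document; each statement's English description precedes it below -/
import Mathlib

section
/- Let 0 < ρ < 1, let α ∈ (0,1) be the unique solution of x^x (1−x)^{1−x} = ρ^x, set h_N = ⌊α(N−1)⌋ and C₂ = 3/(log α − log ρ). Then for all sufficiently large N, P(H_N ≥ h_N − ⌊C₂ log N⌋) ≥ 1 − (3+ρ)/((N−1)ρ²). -/
open Finset Filter Real Topology

/-- `r_{ρ,n}(i) = ρ^{-i} * C(n-1, i)^{-1}`. -/
noncomputable def rfun (ρ : ℝ) (n i : ℕ) : ℝ := (ρ ^ i * (Nat.choose (n - 1) i : ℝ))⁻¹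

/-- `P(H_N ≥ k)` for `k = 1,…,N`, and `0` for `k > N`. -/
noncomputable def tailP (ρ : ℝ) (N k : ℕ) : ℝ :=
  if k ≤ N then (∑ i ∈ Finset.range k, rfun ρ N i)⁻¹ else 0

/-- `P(H_N = k) = P(H_N ≥ k) − P(H_N ≥ k+1)`. -/
noncomputable def pmfP (ρ : ℝ) (N k : ℕ) : ℝ := tailP ρ N k - tailP ρ N (k + 1)

/-- `E(H_N) = ∑_{k=1}^N P(H_N ≥ k)`. -/
noncomputable def EH (ρ : ℝ) (N : ℕ) : ℝ := ∑ k ∈ Finset.Icc 1 N, tailP ρ N k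

/-- `Var(H_N) = ∑_{k=1}^N (k − E(H_N))² P(H_N = k)`. -/
noncomputable def VarH (ρ : ℝ) (N : ℕ) : ℝ :=
  ∑ k ∈ Finset.Icc 1 N, ((k : ℝ) - EH ρ N) ^ 2 * pmfP ρ N k

/-- `P(H_N ≤ t)` for a real threshold `t`. -/
noncomputable def cdfP (ρ : ℝ) (N : ℕ) (t : ℝ) : ℝ :=
  ∑ k ∈ (Finset.Icc 1 N).filter (fun k : ℕ => (k : ℝ) ≤ t), pmfP ρ N k

/-!
With `m = N - 1` and `S = ∑_{i ≤ j} (ρ^i C(m,i))⁻¹` we have `P(H_N ≥ j + 1) = S⁻¹ ≥ 2 - S`.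
The weights `ρ^i C(m,i)` are unimodal in `i`, so each term of `S` with `2 ≤ i ≤ j` is at most the
sum of the terms at `i = 2` and `i = j`; the first is `O(1/m²)`, and the second is at most
`1/(2ρ²m²)` as soon as `ρ^j C(m,j) ≥ 2ρ²m²`. By the entropy bound
`C(m,j) ≥ exp (m H(j/m)) / (m + 1)`, this holds once `m g(j/m) ≥ 3 log N + log (2ρ²)`, where
`g x = x log ρ + H x` and `H = binEntropy`. The equation for `α` says `g α = 0`, and `g` is concave with
`g'(α) = log (1 - α) - (log α - log ρ)`, so `g x ≥ (log α - log ρ + c) (α - x)` for `x` slightly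
below `α`, with `c = -log (1 - α) / 2 > 0`. For `j ≈ α m - C₂ log N` this gives
`m g(j/m) ≥ 3 log N + c C₂ log N`, and the slack `c C₂ log N` absorbs `log (2ρ²)`.
-/

theorem Nat.choose_mul_le_choose_succ_mul {j k i : ℕ} (hij : i + 1 ≤ j) :
    (j + k).choose i * k ≤ (j + k).choose (i + 1) * j := by
  have hc := Nat.choose_succ_right_eq (j + k) i
  refine Nat.le_of_mul_le_mul_right (c := i + 1) ?_ i.succ_pos
  calc (j + k).choose i * k * (i + 1) ≤ (j + k).choose i * ((j + k - i) * j) := by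
        rw [mul_assoc]; exact Nat.mul_le_mul_left _ (Nat.mul_le_mul (by omega) hij)
    _ = (j + k).choose (i + 1) * j * (i + 1) := by rw [← mul_assoc, ← hc]; ring

theorem Nat.choose_succ_mul_le_choose_mul {j k i : ℕ} (hji : j ≤ i) :
    (j + k).choose (i + 1) * j ≤ (j + k).choose i * k := by
  have hc := Nat.choose_succ_right_eq (j + k) i
  refine Nat.le_of_mul_le_mul_right (c := i + 1) ?_ i.succ_pos
  calc (j + k).choose (i + 1) * j * (i + 1) = (j + k).choose i * ((j + k - i) * j) := by
        rw [← mul_assoc, ← hc]; ring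
    _ ≤ (j + k).choose i * k * (i + 1) := by
        rw [mul_assoc]; exact Nat.mul_le_mul_left _ (Nat.mul_le_mul (by omega) (by omega))

-- The largest term of the binomial expansion of `(j + k) ^ (j + k)` is the one of index `j`.
theorem Nat.pow_le_succ_mul_choose_mul_pow_mul_pow (j k : ℕ) :
    (j + k) ^ (j + k) ≤ (j + k + 1) * ((j + k).choose j * j ^ j * k ^ k) := by
  set n := j + k
  set t : ℕ → ℕ := fun i ↦ j ^ i * k ^ (n - i) * n.choose i
  have ht : ∀ i < n, t i = j ^ i * k ^ (n - (i + 1)) * (n.choose i * k) ∧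
      t (i + 1) = j ^ i * k ^ (n - (i + 1)) * (n.choose (i + 1) * j) := by
    intro i hi
    have : n - i = n - (i + 1) + 1 := by omega
    constructor <;> simp only [t, this, pow_succ] <;> ring
  have hup : MonotoneOn t (Set.Icc 0 j) :=
    monotoneOn_of_le_add_one Set.ordConnected_Icc fun i _ _ ⟨_, hij⟩ ↦ by
      rw [(ht i (by omega)).1, (ht i (by omega)).2]
      exact Nat.mul_le_mul_left _ (Nat.choose_mul_le_choose_succ_mul hij)
  have hdown : AntitoneOn t (Set.Icc j n) :=
    antitoneOn_of_add_one_le Set.ordConnected_Icc fun i _ ⟨hji, _⟩ ⟨_, hin⟩ ↦ by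
      rw [(ht i (by omega)).1, (ht i (by omega)).2]
      exact Nat.mul_le_mul_left _ (Nat.choose_succ_mul_le_choose_mul hji)
  have hpeak : ∀ i ∈ range (n + 1), t i ≤ t j := by
    intro i hi
    rw [mem_range] at hi
    rcases le_total i j with hij | hji
    · exact hup ⟨i.zero_le, hij⟩ ⟨j.zero_le, le_rfl⟩ hij
    · exact hdown ⟨le_rfl, by omega⟩ ⟨hji, by omega⟩ hji
  calc n ^ n = ∑ i ∈ range (n + 1), t i := add_pow j k n
    _ ≤ (n + 1) * t j := by simpa using sum_le_sum hpeak
    _ = (n + 1) * (n.choose j * j ^ j * k ^ k) := by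
        simp only [t, n, Nat.add_sub_cancel_left]; ring

theorem Real.exp_mul_binEntropy_le {m j : ℕ} (hj : j ≤ m) :
    exp (m * binEntropy (j / m)) ≤ (m + 1) * m.choose j := by
  obtain ⟨k, rfl⟩ := Nat.exists_eq_add_of_le hj
  rcases Nat.eq_zero_or_pos j with rfl | hj0
  · simp
  rcases Nat.eq_zero_or_pos k with rfl | hk0
  · simp [div_self (Nat.cast_ne_zero.mpr hj0.ne' : (j : ℝ) ≠ 0)]
  have hjR : (0 : ℝ) < j := by exact_mod_cast hj0
  have hkR : (0 : ℝ) < k := by exact_mod_cast hk0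
  have hentropy : ((j + k : ℕ) : ℝ) * binEntropy (j / (j + k : ℕ)) =
      j * log ((j + k) / j) + k * log ((j + k) / k) := by
    have hsub : 1 - (j : ℝ) / (j + k) = k / (j + k) := by field_simp; ring
    push_cast
    rw [binEntropy, hsub, inv_div, inv_div]
    field_simp
  have hnat : ((j + k : ℕ) : ℝ) ^ (j + k) ≤
      ((j + k : ℕ) + 1) * ((j + k).choose j * j ^ j * k ^ k) := by
    exact_mod_cast Nat.pow_le_succ_mul_choose_mul_pow_mul_pow j k
  rw [hentropy, exp_add, exp_nat_mul, exp_nat_mul, exp_log (by positivity),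
    exp_log (by positivity), div_pow, div_pow, ← mul_div_mul_comm, ← pow_add,
    div_le_iff₀ (by positivity)]
  push_cast at hnat ⊢
  linarith

theorem ConcaveOn.exists_add_mul_sub_le {g : ℝ → ℝ} {s : Set ℝ} {α d κ : ℝ}
    (hg : ConcaveOn ℝ s g) (hαs : α ∈ s) (hs : s ∈ 𝓝[<] α)
    (hd : HasDerivWithinAt g d (Set.Iio α) α) (hκ : d < κ) :
    ∃ y < α, ∀ x ∈ Set.Icc y α, g α + κ * (x - α) ≤ g x := by
  have hslope : ∀ᶠ z in 𝓝[<] α, slope g α z < κ ∧ z ∈ s :=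
    ((hasDerivWithinAt_iff_tendsto_slope' (s := Set.Iio α) (by simp)).mp hd |>.eventually
      (eventually_lt_nhds hκ)).and hs
  obtain ⟨y, ⟨hyκ, hys⟩, hyα⟩ := (hslope.and self_mem_nhdsWithin).exists
  refine ⟨y, hyα, fun x ⟨hyx, hxα⟩ ↦ ?_⟩
  rcases hxα.eq_or_lt with rfl | hxα
  · simp
  have hxs : x ∈ s := hg.1.ordConnected.out hys hαs ⟨hyx, hxα.le⟩
  have hx : slope g α x < κ :=
    (hg.slope_anti hαs ⟨hys, hyα.ne⟩ ⟨hxs, hxα.ne⟩ hyx).trans_lt hyκ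
  rw [slope_def_field, div_lt_iff_of_neg (sub_neg.mpr hxα)] at hx
  linarith

theorem mul_sub_le_mul_apply_div {g : ℝ → ℝ} {y α κ m t : ℝ} (hm : 0 < m)
    (hg : ∀ x ∈ Set.Icc y α, κ * (α - x) ≤ g x) (hy : y * m ≤ t) (ht : t ≤ α * m) :
    κ * (α * m - t) ≤ m * g (t / m) := by
  have hx := hg (t / m) ⟨(le_div_iff₀ hm).mpr hy, (div_le_iff₀ hm).mpr ht⟩
  calc κ * (α * m - t) = m * (κ * (α - t / m)) := by field_simp
    _ ≤ m * g (t / m) := by gcongr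

-- `log (ρ ^ j * C(m, j)) = m * growthRate ρ (j / m) + O(log m)`.
noncomputable def growthRate (ρ x : ℝ) : ℝ := x * log ρ + binEntropy x

theorem concaveOn_growthRate (ρ : ℝ) : ConcaveOn ℝ (Set.Icc 0 1) (growthRate ρ) :=
  (((LinearMap.id : ℝ →ₗ[ℝ] ℝ).smulRight (log ρ)).concaveOn (convex_Icc 0 1)).add
    strictConcave_binEntropy.concaveOn

theorem hasDerivAt_growthRate (ρ : ℝ) {x : ℝ} (hx₀ : x ≠ 0) (hx₁ : x ≠ 1) :
    HasDerivAt (growthRate ρ) (log ρ + (log (1 - x) - log x)) x :=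
  ((hasDerivAt_id x).mul_const (log ρ)).add (hasDerivAt_binEntropy hx₀ hx₁) |>.congr_deriv
    (by simp)

theorem growthRate_eq_zero {ρ α : ℝ} (hρ : 0 < ρ) (hα₀ : 0 < α) (hα₁ : α < 1)
    (hsol : α ^ α * (1 - α) ^ (1 - α) = ρ ^ α) : growthRate ρ α = 0 := by
  have hα₁' : 0 < 1 - α := by linarith
  have hlog := congrArg log hsol
  rw [log_mul (by positivity) (by positivity), log_rpow hα₀, log_rpow hα₁', log_rpow hρ] at hlog
  rw [growthRate, binEntropy, log_inv, log_inv]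
  linarith

theorem log_lt_log_of_growthRate_eq_zero {ρ α : ℝ} (hα₀ : 0 < α) (hα₁ : α < 1)
    (hzero : growthRate ρ α = 0) : log ρ < log α := by
  have h : 0 < (1 - α) * log (1 - α)⁻¹ :=
    mul_pos (by linarith) (log_pos ((one_lt_inv₀ (by linarith)).mpr (by linarith)))
  rw [growthRate, binEntropy, log_inv] at hzero
  nlinarith

theorem exp_mul_growthRate_le {ρ : ℝ} (hρ : 0 < ρ) {m j : ℕ} (hj : j ≤ m) :
    exp (m * growthRate ρ (j / m)) ≤ (m + 1) * (ρ ^ j * m.choose j) := by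
  rcases Nat.eq_zero_or_pos m with rfl | hm
  · simp [Nat.le_zero.mp hj]
  have hsplit : (m : ℝ) * growthRate ρ (j / m) = j * log ρ + m * binEntropy (j / m) := by
    rw [growthRate]; field_simp
  rw [hsplit, exp_add, exp_nat_mul, exp_log hρ, mul_left_comm]
  exact mul_le_mul_of_nonneg_left (exp_mul_binEntropy_le hj) (by positivity)

theorem exists_mul_sub_le_growthRate {ρ α : ℝ} (hα₀ : 0 < α) (hα₁ : α < 1)
    (hzero : growthRate ρ α = 0) :
    ∃ y < α, ∀ x ∈ Set.Icc y α,
      (log α - log ρ - log (1 - α) / 2) * (α - x) ≤ growthRate ρ x := by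
  have hlog : log (1 - α) < 0 := log_neg (by linarith) (by linarith)
  obtain ⟨y, hyα, hy⟩ := (concaveOn_growthRate ρ).exists_add_mul_sub_le ⟨hα₀.le, hα₁.le⟩
    (Icc_mem_nhdsLT_of_mem ⟨hα₀, hα₁.le⟩)
    (hasDerivAt_growthRate ρ hα₀.ne' hα₁.ne).hasDerivWithinAt
    (κ := log ρ - log α + log (1 - α) / 2) (by linarith)
  refine ⟨y, hyα, fun x hx ↦ ?_⟩
  linarith [hy x hx]

theorem two_mul_sq_le_pow_mul_choose {ρ : ℝ} (hρ : 0 < ρ) {m j : ℕ} (hj : j ≤ m)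
    (h : 3 * log (m + 1) + log (2 * ρ ^ 2) ≤ m * growthRate ρ (j / m)) :
    2 * ρ ^ 2 * m ^ 2 ≤ ρ ^ j * m.choose j := by
  have hexp : exp (3 * log (m + 1) + log (2 * ρ ^ 2)) =
      (m + 1) * (2 * ρ ^ 2 * (m + 1) ^ 2) := by
    rw [show (3 : ℝ) * log (m + 1) = log ((m + 1) ^ 3) by rw [log_pow]; norm_num, exp_add,
      exp_log (by positivity), exp_log (by positivity)]
    ring
  have hle := (exp_le_exp.mpr h).trans (exp_mul_growthRate_le hρ hj)
  rw [hexp] at hle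
  calc 2 * ρ ^ 2 * (m : ℝ) ^ 2 ≤ 2 * ρ ^ 2 * (m + 1) ^ 2 := by gcongr; linarith
    _ ≤ ρ ^ j * m.choose j := le_of_mul_le_mul_left hle (by positivity)

theorem le_max_of_down_then_up {β : Type*} [LinearOrder β] {u : ℕ → β} {P : ℕ → Prop}
    (hP : Antitone P) {a b : ℕ} (hdown : ∀ l ∈ Set.Ico a b, P l → u (l + 1) ≤ u l)
    (hup : ∀ l ∈ Set.Ico a b, ¬P l → u l ≤ u (l + 1)) {i : ℕ} (hi : i ∈ Set.Icc a b) :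
    u i ≤ max (u a) (u b) := by
  by_cases hPi : ∀ l ∈ Set.Ico a i, P l
  · have hanti : AntitoneOn u (Set.Icc a i) :=
      antitoneOn_of_add_one_le Set.ordConnected_Icc fun l _ ⟨hal, _⟩ ⟨_, hli⟩ ↦
        hdown l ⟨hal, (Nat.lt_of_succ_le hli).trans_le hi.2⟩ (hPi l ⟨hal, hli⟩)
    exact le_max_of_le_left (hanti ⟨le_rfl, hi.1⟩ ⟨hi.1, le_rfl⟩ hi.1)
  · obtain ⟨l₀, ⟨_, hl₀i⟩, hnP⟩ := not_forall₂.mp hPi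
    have hmono : MonotoneOn u (Set.Icc i b) :=
      monotoneOn_of_le_add_one Set.ordConnected_Icc fun l _ ⟨hil, _⟩ ⟨_, hlb⟩ ↦
        hup l ⟨hi.1.trans hil, hlb⟩ fun hPl ↦ hnP (hP (by omega) hPl)
    exact le_max_of_le_right (hmono ⟨le_rfl, hi.2⟩ ⟨hi.2, le_rfl⟩ hi.2)

theorem rfun_succ_eq (ρ : ℝ) (m i : ℕ) : rfun ρ (m + 1) i = (ρ ^ i * m.choose i)⁻¹ := rfl

theorem rfun_nonneg {ρ : ℝ} (hρ : 0 ≤ ρ) (n i : ℕ) : 0 ≤ rfun ρ n i := by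
  unfold rfun; positivity

theorem rfun_le_max {ρ : ℝ} (hρ : 0 < ρ) {m a b i : ℕ} (hbm : b ≤ m) (hi : i ∈ Set.Icc a b) :
    rfun ρ (m + 1) i ≤ max (rfun ρ (m + 1) a) (rfun ρ (m + 1) b) := by
  have hw : ∀ l ≤ m, (0 : ℝ) < ρ ^ l * m.choose l := fun l hl ↦ by
    have := Nat.choose_pos hl; positivity
  have hrec : ∀ l < m, ρ ^ (l + 1) * (m.choose (l + 1) : ℝ) * (l + 1) =
      ρ ^ l * m.choose l * (ρ * (m - l)) := fun l hl ↦ by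
    have h := congrArg (Nat.cast : ℕ → ℝ) (Nat.choose_succ_right_eq m l)
    push_cast [Nat.cast_sub hl.le] at h
    linear_combination ρ ^ (l + 1) * h
  -- by `hrec`, the weight `ρ ^ l * C(m, l)` grows at step `l` exactly when `l + 1 ≤ ρ (m - l)`
  refine le_max_of_down_then_up (P := fun l : ℕ ↦ (l + 1 : ℝ) ≤ ρ * (m - l))
    (fun l l' hll' hP ↦ ?_) (fun l ⟨_, hlb⟩ hP ↦ ?_) (fun l ⟨_, hlb⟩ hP ↦ ?_) hi
  · have : (l : ℝ) ≤ l' := by exact_mod_cast hll'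
    dsimp only at hP ⊢
    nlinarith
  · rw [rfun_succ_eq, rfun_succ_eq]
    refine inv_anti₀ (hw l (by omega)) (le_of_mul_le_mul_right ?_ (by positivity : (0 : ℝ) < l + 1))
    rw [hrec l (by omega)]
    exact mul_le_mul_of_nonneg_left hP (hw l (by omega)).le
  · rw [rfun_succ_eq, rfun_succ_eq]
    refine inv_anti₀ (hw (l + 1) (by omega))
      (le_of_mul_le_mul_right ?_ (by positivity : (0 : ℝ) < l + 1))
    rw [hrec l (by omega)]
    exact mul_le_mul_of_nonneg_left (not_le.mp hP).le (hw l (by omega)).le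

theorem sum_range_rfun_le {ρ : ℝ} (hρ : 0 < ρ) {m j : ℕ} (hm : 5 ≤ m) (hj : 2 ≤ j)
    (hjm : j ≤ m) (hchoose : 2 * ρ ^ 2 * m ^ 2 ≤ ρ ^ j * m.choose j) :
    ∑ i ∈ range (j + 1), rfun ρ (m + 1) i ≤ 1 + (3 + ρ) / (m * ρ ^ 2) := by
  have hmR : (5 : ℝ) ≤ m := by exact_mod_cast hm
  have hm1 : (0 : ℝ) < m - 1 := by linarith
  have hr0 : rfun ρ (m + 1) 0 = 1 := by simp [rfun_succ_eq]
  have hr1 : rfun ρ (m + 1) 1 = ρ / (m * ρ ^ 2) := by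
    rw [rfun_succ_eq, Nat.choose_one_right, pow_one]
    field_simp
  have hr2 : m * rfun ρ (m + 1) 2 ≤ (5 / 2) / (m * ρ ^ 2) := by
    rw [rfun_succ_eq, Nat.cast_choose_two, ← div_eq_mul_inv,
      div_le_div_iff₀ (by positivity) (by positivity)]
    nlinarith [mul_pos (by positivity : (0 : ℝ) < ρ ^ 2) (by linarith : (0 : ℝ) < m)]
  have hrj : m * rfun ρ (m + 1) j ≤ (1 / 2) / (m * ρ ^ 2) := by
    calc m * rfun ρ (m + 1) j ≤ m * (2 * ρ ^ 2 * m ^ 2)⁻¹ := by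
          rw [rfun_succ_eq]; gcongr
      _ = (1 / 2) / (m * ρ ^ 2) := by field_simp
  have hr2j : 0 ≤ rfun ρ (m + 1) 2 + rfun ρ (m + 1) j :=
    add_nonneg (rfun_nonneg hρ.le _ _) (rfun_nonneg hρ.le _ _)
  have hmiddle : ∑ i ∈ Ico 2 (j + 1), rfun ρ (m + 1) i ≤
      m * (rfun ρ (m + 1) 2 + rfun ρ (m + 1) j) := by
    calc ∑ i ∈ Ico 2 (j + 1), rfun ρ (m + 1) i
        ≤ #(Ico 2 (j + 1)) • (rfun ρ (m + 1) 2 + rfun ρ (m + 1) j) := by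
          refine sum_le_card_nsmul _ _ _ fun i hi ↦ ?_
          rw [mem_Ico] at hi
          exact (rfun_le_max hρ hjm ⟨hi.1, by omega⟩).trans
            (max_le_add_of_nonneg (rfun_nonneg hρ.le _ _) (rfun_nonneg hρ.le _ _))
      _ ≤ m * (rfun ρ (m + 1) 2 + rfun ρ (m + 1) j) := by
          rw [nsmul_eq_mul, Nat.card_Ico]
          gcongr
          exact_mod_cast (by omega : j + 1 - 2 ≤ m)
  rw [range_eq_Ico, sum_eq_sum_Ico_succ_bot (by omega), sum_eq_sum_Ico_succ_bot (by omega),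
    hr0, hr1]
  have : (3 + ρ) / (m * ρ ^ 2) =
      ρ / (m * ρ ^ 2) + (5 / 2) / (m * ρ ^ 2) + (1 / 2) / (m * ρ ^ 2) := by
    ring
  linarith

theorem one_sub_le_tailP {ρ : ℝ} (hρ : 0 < ρ) {m j : ℕ} (hm : 5 ≤ m) (hj : 2 ≤ j)
    (hjm : j ≤ m) (hchoose : 2 * ρ ^ 2 * m ^ 2 ≤ ρ ^ j * m.choose j) :
    1 - (3 + ρ) / (m * ρ ^ 2) ≤ tailP ρ (m + 1) (j + 1) := by
  rw [tailP, if_pos (by omega)]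
  have hS : 1 ≤ ∑ i ∈ range (j + 1), rfun ρ (m + 1) i := by
    rw [sum_range_succ', rfun_succ_eq]
    simpa using sum_nonneg fun i _ ↦ rfun_nonneg hρ.le (m + 1) (i + 1)
  set S := ∑ i ∈ range (j + 1), rfun ρ (m + 1) i
  have hinv : 2 - S ≤ S⁻¹ := by
    rw [← sub_nonneg, show S⁻¹ - (2 - S) = (S - 1) ^ 2 / S by field_simp; ring]
    positivity
  linarith [sum_range_rfun_le hρ hm hj hjm hchoose]

theorem exists_floor_sub_floor_eq_succ {a b : ℝ} {m : ℕ} (hb : 0 ≤ b) (hba : b + 4 ≤ a)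
    (ham : a ≤ m) :
    ∃ j : ℕ, ⌊a⌋₊ - ⌊b⌋₊ = j + 1 ∧ 2 ≤ j ∧ j ≤ m ∧ b ≤ a - j ∧ a - j ≤ b + 2 := by
  have ha := Nat.floor_le (hb.trans (by linarith) : 0 ≤ a)
  have ha' := Nat.lt_floor_add_one a
  have hb' := Nat.floor_le hb
  have hb'' := Nat.lt_floor_add_one b
  have hlt : ⌊b⌋₊ + 3 ≤ ⌊a⌋₊ := by
    have : (⌊b⌋₊ : ℝ) + 3 < ⌊a⌋₊ + 1 := by linarith
    have : ⌊b⌋₊ + 3 < ⌊a⌋₊ + 1 := by exact_mod_cast this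
    omega
  have hle : ⌊a⌋₊ ≤ m := Nat.floor_le_of_le ham
  refine ⟨⌊a⌋₊ - ⌊b⌋₊ - 1, by omega, by omega, by omega, ?_⟩
  have hcast : ((⌊a⌋₊ - ⌊b⌋₊ - 1 : ℕ) : ℝ) = ⌊a⌋₊ - ⌊b⌋₊ - 1 := by
    rw [Nat.cast_sub (by omega), Nat.cast_sub (by omega)]; simp
  rw [hcast]
  constructor <;> linarith

theorem eventually_mul_log_add_le (C D : ℝ) {δ : ℝ} (hδ : 0 < δ) :
    ∀ᶠ N : ℕ in atTop, C * log N + D ≤ δ * N := by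
  have hlog : (fun N : ℕ ↦ log N) =o[atTop] (fun N : ℕ ↦ (N : ℝ)) :=
    isLittleO_log_id_atTop.comp_tendsto tendsto_natCast_atTop_atTop
  have hconst : (fun _ : ℕ ↦ D) =o[atTop] (fun N : ℕ ↦ (N : ℝ)) :=
    (Asymptotics.isLittleO_const_id_atTop D).comp_tendsto tendsto_natCast_atTop_atTop
  filter_upwards [((hlog.const_mul_left C).add hconst).def hδ] with N hN
  rw [Real.norm_natCast] at hN
  exact (le_abs_self _).trans hN

theorem tail_prob_lower_bound_general (ρ α C₂ : ℝ) (hρ0 : 0 < ρ)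
    (hα : α ∈ Set.Ioo (0 : ℝ) 1)
    (hsol : α ^ α * (1 - α) ^ (1 - α) = ρ ^ α)
    (hC₂ : C₂ = 3 / (Real.log α - Real.log ρ)) :
    ∀ᶠ N : ℕ in atTop,
      tailP ρ N (⌊α * ((N : ℝ) - 1)⌋₊ - ⌊C₂ * Real.log N⌋₊) ≥
        1 - (3 + ρ) / (((N : ℝ) - 1) * ρ ^ 2) := by
  obtain ⟨hα₀, hα₁⟩ := hα
  have hzero := growthRate_eq_zero hρ0 hα₀ hα₁ hsol
  have hL := sub_pos.mpr (log_lt_log_of_growthRate_eq_zero hα₀ hα₁ hzero)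
  have hc : 0 < -log (1 - α) / 2 := by linarith [log_neg (by linarith : 0 < 1 - α) (by linarith)]
  have hC₂0 : 0 < C₂ := hC₂ ▸ div_pos three_pos hL
  have hκ : (log α - log ρ - log (1 - α) / 2) * C₂ = 3 + -log (1 - α) / 2 * C₂ := by
    rw [hC₂]; field_simp; ring
  obtain ⟨y, hyα, hchord⟩ := exists_mul_sub_le_growthRate hα₀ hα₁ hzero
  filter_upwards [eventually_ge_atTop 6, eventually_mul_log_add_le C₂ 5 hα₀,
    eventually_mul_log_add_le C₂ 3 (sub_pos.mpr hyα),
    ((tendsto_log_atTop.comp tendsto_natCast_atTop_atTop).const_mul_atTop (mul_pos hc hC₂0)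
      ).eventually_ge_atTop (log (2 * ρ ^ 2))] with N hN hlarge hslack hlog
  obtain ⟨m, rfl⟩ : ∃ m, N = m + 1 := ⟨N - 1, by omega⟩
  simp only [Function.comp_apply] at hlog
  push_cast at hlarge hslack hlog ⊢
  rw [add_sub_cancel_right]
  have hm : (5 : ℝ) ≤ m := by exact_mod_cast (by omega : 5 ≤ m)
  have hb₀ : 0 ≤ C₂ * log (m + 1) := mul_nonneg hC₂0.le (log_nonneg (by linarith))
  obtain ⟨j, hk, hj, hjm, hlow, hhigh⟩ :=
    exists_floor_sub_floor_eq_succ (a := α * m) (m := m) hb₀ (by linarith) (by nlinarith)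
  have hchord_j := mul_sub_le_mul_apply_div (m := m) (t := j) (by positivity) hchord
    (by nlinarith) (by linarith)
  have hrate : 3 * log (m + 1) + log (2 * ρ ^ 2) ≤ m * growthRate ρ (j / m) :=
    calc 3 * log (m + 1) + log (2 * ρ ^ 2)
        ≤ (log α - log ρ - log (1 - α) / 2) * (C₂ * log (m + 1)) := by
          linear_combination hlog - log ((m : ℝ) + 1) * hκ
      _ ≤ (log α - log ρ - log (1 - α) / 2) * (α * m - j) := by gcongr; linarith
      _ ≤ m * growthRate ρ (j / m) := hchord_j
  rw [hk]
  exact one_sub_le_tailP hρ0 (by omega) hj hjm (two_mul_sq_le_pow_mul_choose hρ0 hjm hrate)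

theorem tail_prob_lower_bound (ρ α C₂ : ℝ) (hρ0 : 0 < ρ) (hρ1 : ρ < 1)
    (hα : α ∈ Set.Ioo (0 : ℝ) 1)
    (hsol : α ^ α * (1 - α) ^ (1 - α) = ρ ^ α)
    (huniq : ∀ x ∈ Set.Ioo (0 : ℝ) 1, x ^ x * (1 - x) ^ (1 - x) = ρ ^ x → x = α)
    (hC₂ : C₂ = 3 / (Real.log α - Real.log ρ)) :
    ∀ᶠ N : ℕ in atTop,
      tailP ρ N (⌊α * ((N : ℝ) - 1)⌋₊ - ⌊C₂ * Real.log N⌋₊) ≥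
        1 - (3 + ρ) / (((N : ℝ) - 1) * ρ ^ 2) :=
  tail_prob_lower_bound_general ρ α C₂ hρ0 hα hsol hC₂
end

section
/- Let 0 < ρ < 1, let α ∈ (0,1) be the unique solution of x^x (1−x)^{1−x} = ρ^x, and set h_N = ⌊α(N−1)⌋. Then for all sufficiently large N and every integer k with 1 ≤ k ≤ N − h_N, one has ∑_{i=0}^{h_N+k−1} r_{ρ,N}(i) ≥ k · r_{ρ,N}(h_N), and consequently P(H_N ≥ h_N + k) ≤ 1/(k · r_{ρ,N}(h_N)). -/
/-! The weights `ρ ^ j * C(N - 1, j)`, reciprocals of `r_{ρ,N}(j)`, have their mode near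
`ρ (N - 1) / (1 + ρ)`, so they decrease from `j = h` on as soon as
`h ≳ ρ (N - 1) / (1 + ρ)`. Since `α > ρ ≥ ρ / (1 + ρ)`, this holds for `h = ⌊α (N - 1)⌋` when
`N` is large. Then each of the terms `r_{ρ,N}(h), …, r_{ρ,N}(h + k - 1)` is at least
`r_{ρ,N}(h)`, and `P(H_N ≥ h + k)` is the reciprocal of a sum containing them. -/

open Finset Filter Real Topology

theorem lt_of_rpow_self_mul_rpow_one_sub_eq {ρ α : ℝ} (hα : α ∈ Set.Ioo (0 : ℝ) 1)
    (hsol : α ^ α * (1 - α) ^ (1 - α) = ρ ^ α) : ρ < α := by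
  obtain ⟨hα0, hα1⟩ := hα
  by_contra! hαρ
  have hlt : α ^ α * (1 - α) ^ (1 - α) < α ^ α :=
    mul_lt_of_lt_one_right (rpow_pos_of_pos hα0 α)
      (rpow_lt_one (by linarith) (by linarith) (by linarith))
  have hle : α ^ α ≤ ρ ^ α := rpow_le_rpow hα0.le hαρ hα0.le
  linarith

theorem pow_succ_mul_choose_succ_le {ρ : ℝ} (hρ : 0 ≤ ρ) {n j : ℕ}
    (hj : ρ * ((n - j : ℕ) : ℝ) ≤ j + 1) :
    ρ ^ (j + 1) * (n.choose (j + 1) : ℝ) ≤ ρ ^ j * (n.choose j : ℝ) := by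
  have hrec : (n.choose (j + 1) : ℝ) * (j + 1) = (n.choose j : ℝ) * ((n - j : ℕ) : ℝ) := by
    exact_mod_cast n.choose_succ_right_eq j
  have hstep : ρ * (n.choose (j + 1) : ℝ) ≤ n.choose j := by
    refine le_of_mul_le_mul_right ?_ (by positivity : (0 : ℝ) < j + 1)
    calc ρ * (n.choose (j + 1) : ℝ) * (j + 1)
          = (n.choose j : ℝ) * (ρ * ((n - j : ℕ) : ℝ)) := by rw [mul_assoc, hrec]; ring
      _ ≤ n.choose j * (j + 1) := by gcongr
  calc ρ ^ (j + 1) * (n.choose (j + 1) : ℝ) = ρ ^ j * (ρ * n.choose (j + 1)) := by ring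
    _ ≤ ρ ^ j * n.choose j := by gcongr

theorem antitoneOn_pow_mul_choose {ρ : ℝ} (hρ : 0 ≤ ρ) {n m : ℕ}
    (hm : ρ * ((n - m : ℕ) : ℝ) ≤ m + 1) :
    AntitoneOn (fun j ↦ ρ ^ j * (n.choose j : ℝ)) (Set.Ici m) := by
  refine antitoneOn_nat_Ici_of_succ_le fun j hj ↦ pow_succ_mul_choose_succ_le hρ ?_
  calc ρ * ((n - j : ℕ) : ℝ) ≤ ρ * ((n - m : ℕ) : ℝ) := by gcongr
    _ ≤ m + 1 := hm
    _ ≤ j + 1 := by gcongr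

theorem rfun_pos {ρ : ℝ} (hρ : 0 < ρ) {n i : ℕ} (hi : i ≤ n - 1) : 0 < rfun ρ n i := by
  have := Nat.choose_pos hi
  unfold rfun
  positivity

theorem rfun_le_rfun {ρ : ℝ} (hρ : 0 < ρ) {N m i : ℕ}
    (hm : ρ * ((N - 1 - m : ℕ) : ℝ) ≤ m + 1) (hmi : m ≤ i) (hi : i ≤ N - 1) :
    rfun ρ N m ≤ rfun ρ N i := by
  have hpos : 0 < ρ ^ i * ((N - 1).choose i : ℝ) := by
    have := Nat.choose_pos hi
    positivity
  exact inv_anti₀ hpos (antitoneOn_pow_mul_choose hρ.le hm Set.self_mem_Ici hmi hmi)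

theorem mul_rfun_le_sum_range_rfun {ρ : ℝ} (hρ : 0 < ρ) {N m k : ℕ}
    (hm : ρ * ((N - 1 - m : ℕ) : ℝ) ≤ m + 1) (hmk : m + k ≤ N) :
    k * rfun ρ N m ≤ ∑ i ∈ range (m + k), rfun ρ N i := by
  rw [sum_range_add]
  have hhead : 0 ≤ ∑ i ∈ range m, rfun ρ N i :=
    sum_nonneg fun i _ ↦ inv_nonneg.2 (by positivity)
  have htail : k * rfun ρ N m ≤ ∑ i ∈ range k, rfun ρ N (m + i) := by
    simpa using card_nsmul_le_sum (range k) (fun i ↦ rfun ρ N (m + i)) (rfun ρ N m)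
      fun i hi ↦ rfun_le_rfun hρ hm (by omega) (by simp at hi; omega)
  linarith

theorem eventually_mul_sub_floor_le {ρ α : ℝ} (hρ : 0 ≤ ρ) (hρα : ρ < α * (1 + ρ)) :
    ∀ᶠ N : ℕ in atTop,
      ρ * ((N - 1 - ⌊α * ((N : ℝ) - 1)⌋₊ : ℕ) : ℝ) ≤ ⌊α * ((N : ℝ) - 1)⌋₊ + 1 := by
  set c := α * (1 + ρ) - ρ
  have hc : 0 < c := by linarith
  filter_upwards [eventually_ge_atTop (⌈ρ / c⌉₊ + 1)] with N hN
  set h := ⌊α * ((N : ℝ) - 1)⌋₊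
  rcases le_or_gt h (N - 1) with hhN | hhN
  · have hfloor : α * ((N : ℝ) - 1) < h + 1 := Nat.lt_floor_add_one _
    have hlarge : ρ ≤ c * ((N : ℝ) - 1) := by
      have : ρ / c ≤ (N : ℝ) - 1 := by
        have := Nat.le_ceil (ρ / c)
        have : ((⌈ρ / c⌉₊ + 1 : ℕ) : ℝ) ≤ N := by exact_mod_cast hN
        push_cast at this
        linarith
      rwa [div_le_iff₀ hc, mul_comm] at this
    rw [Nat.cast_sub hhN, Nat.cast_sub (by omega : 1 ≤ N), Nat.cast_one]
    nlinarith
  · rw [Nat.sub_eq_zero_of_le hhN.le]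
    simp only [CharP.cast_eq_zero, mul_zero]
    positivity

theorem tail_prob_upper_bound_general (ρ α : ℝ) (hρ0 : 0 < ρ)
    (hα : α ∈ Set.Ioo (0 : ℝ) 1)
    (hsol : α ^ α * (1 - α) ^ (1 - α) = ρ ^ α) :
    ∀ᶠ N : ℕ in atTop, ∀ k : ℕ, 1 ≤ k → k ≤ N - ⌊α * ((N : ℝ) - 1)⌋₊ →
      (∑ i ∈ Finset.range (⌊α * ((N : ℝ) - 1)⌋₊ + k), rfun ρ N i ≥
          (k : ℝ) * rfun ρ N ⌊α * ((N : ℝ) - 1)⌋₊) ∧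
      tailP ρ N (⌊α * ((N : ℝ) - 1)⌋₊ + k) ≤
        1 / ((k : ℝ) * rfun ρ N ⌊α * ((N : ℝ) - 1)⌋₊) := by
  have hρα : ρ < α * (1 + ρ) := by
    nlinarith [lt_of_rpow_self_mul_rpow_one_sub_eq hα hsol, hα.1]
  filter_upwards [eventually_mul_sub_floor_le hρ0.le hρα] with N hN k hk1 hk2
  set h := ⌊α * ((N : ℝ) - 1)⌋₊
  have hsum := mul_rfun_le_sum_range_rfun hρ0 hN (by omega : h + k ≤ N)
  have hpos : 0 < (k : ℝ) * rfun ρ N h :=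
    mul_pos (by exact_mod_cast hk1) (rfun_pos hρ0 (by omega))
  refine ⟨hsum, ?_⟩
  rw [tailP, if_pos (by omega), one_div]
  exact inv_anti₀ hpos hsum

theorem tail_prob_upper_bound (ρ α : ℝ) (hρ0 : 0 < ρ) (hρ1 : ρ < 1)
    (hα : α ∈ Set.Ioo (0 : ℝ) 1)
    (hsol : α ^ α * (1 - α) ^ (1 - α) = ρ ^ α)
    (huniq : ∀ x ∈ Set.Ioo (0 : ℝ) 1, x ^ x * (1 - x) ^ (1 - x) = ρ ^ x → x = α) :
    ∀ᶠ N : ℕ in atTop, ∀ k : ℕ, 1 ≤ k → k ≤ N - ⌊α * ((N : ℝ) - 1)⌋₊ →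
      (∑ i ∈ Finset.range (⌊α * ((N : ℝ) - 1)⌋₊ + k), rfun ρ N i ≥
          (k : ℝ) * rfun ρ N ⌊α * ((N : ℝ) - 1)⌋₊) ∧
      tailP ρ N (⌊α * ((N : ℝ) - 1)⌋₊ + k) ≤
        1 / ((k : ℝ) * rfun ρ N ⌊α * ((N : ℝ) - 1)⌋₊) :=
  tail_prob_upper_bound_general ρ α hρ0 hα hsol
end

section
/- Let ρ ≥ 1. Then for all sufficiently large N, N − 4 ≤ E(H_N) ≤ N. -/
open Finset Filter Real Topology

/-!
Write `r i = ρ⁻ⁱ / C(N-1, i)` and `s k = ∑_{i<k} r i`, so that `E(H_N) = ∑_{k=1}^N 1 / s k`.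
Since `r 0 = 1`, every `s k ≥ 1` and `E(H_N) ≤ N`. Conversely `1 / s ≥ 2 - s`, and summing the
partial sums by parts gives `E(H_N) ≥ N - ∑_{i=1}^{N-1} (N - i) r i`. For `ρ ≥ 1`,
`(N - i) r i ≤ (N - i) / C(N-1, i) = N / C(N, i)`, and `∑_{i=1}^{N-1} 1 / C(N, i) ≤ 4 / N`: the two
end terms are `1 / N` and each of the `N - 3` middle terms is at most `1 / C(N, 2)`.
-/

namespace Nat

theorem choose_le_choose_of_le_of_le_half {n a b : ℕ} (hab : a ≤ b) (hb : b ≤ n / 2) :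
    n.choose a ≤ n.choose b := by
  induction b, hab using Nat.le_induction with
  | base => rfl
  | succ b _ ih => exact (ih (by omega)).trans (choose_le_succ_of_lt_half_left (by omega))

theorem choose_le_choose_of_le_of_le_sub {n k i : ℕ} (hki : k ≤ i) (hin : i ≤ n - k) :
    n.choose k ≤ n.choose i := by
  rcases le_or_gt i (n / 2) with hi | hi
  · exact choose_le_choose_of_le_of_le_half hki hi
  · rw [← choose_symm (by omega : i ≤ n)]
    exact choose_le_choose_of_le_of_le_half (by omega) (by omega)

end Nat

theorem sum_Ico_inv_choose_le {N : ℕ} (hN : 3 ≤ N) :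
    ∑ i ∈ Ico 1 N, ((N.choose i : ℝ))⁻¹ ≤ 4 / N := by
  obtain ⟨n, rfl⟩ : ∃ n, N = n + 3 := ⟨N - 3, by omega⟩
  have hmiddle : ∑ i ∈ Ico 2 (n + 2), (((n + 3).choose i : ℝ))⁻¹
      ≤ n * (((n + 3).choose 2 : ℝ))⁻¹ := by
    have hbound : ∀ i ∈ Ico 2 (n + 2),
        (((n + 3).choose i : ℝ))⁻¹ ≤ (((n + 3).choose 2 : ℝ))⁻¹ := by
      intro i hi
      obtain ⟨h2i, hin⟩ := mem_Ico.mp hi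
      have hle := Nat.choose_le_choose_of_le_of_le_sub (n := n + 3) h2i (by omega)
      have hpos : 0 < (n + 3).choose 2 := Nat.choose_pos (by omega)
      gcongr
    simpa using sum_le_card_nsmul _ _ _ hbound
  have hends : (n + 3).choose 1 = n + 3 ∧ (n + 3).choose (n + 2) = n + 3 := by
    rw [Nat.choose_symm_of_eq_add (show n + 3 = (n + 2) + 1 by omega), Nat.choose_one_right]
    exact ⟨rfl, rfl⟩
  rw [sum_Ico_succ_top (by omega), sum_eq_sum_Ico_succ_bot (by omega), hends.1, hends.2]
  rw [Nat.cast_choose_two] at hmiddle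
  push_cast at hmiddle ⊢
  have hquad : (n : ℝ) * (((n : ℝ) + 3) * ((n : ℝ) + 3 - 1) / 2)⁻¹ ≤ 2 / ((n : ℝ) + 3) := by
    rw [show (n : ℝ) + 3 - 1 = n + 2 by ring, inv_div, ← mul_div_assoc,
      div_le_div_iff₀ (by positivity) (by positivity)]
    nlinarith
  have hsplit : (4 : ℝ) / (n + 3) = ((n : ℝ) + 3)⁻¹ + 2 / (n + 3) + ((n : ℝ) + 3)⁻¹ := by ring
  linarith

theorem sum_Icc_sum_range_eq {M : Type*} [AddCommMonoid M] (f : ℕ → M) (N : ℕ) :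
    ∑ k ∈ Icc 1 N, ∑ i ∈ range k, f i = ∑ i ∈ range N, (N - i) • f i := by
  rw [sum_comm' (t' := range N) (s' := fun i => Icc (i + 1) N) fun k i => by
    simp only [mem_Icc, mem_range]; omega]
  refine sum_congr rfl fun i _ => ?_
  rw [sum_const, Nat.card_Icc, Nat.add_sub_add_right]

theorem two_sub_le_inv {s : ℝ} (hs : 0 < s) : 2 - s ≤ s⁻¹ := by
  rw [← sub_nonneg, show s⁻¹ - (2 - s) = (s - 1) ^ 2 / s by field_simp; ring]
  positivity

section PartialSums

variable {r : ℕ → ℝ} (h0 : r 0 = 1) (hr : ∀ i, 0 ≤ r i)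
include h0 hr

theorem one_le_sum_range {k : ℕ} (hk : 1 ≤ k) : 1 ≤ ∑ i ∈ range k, r i :=
  h0 ▸ single_le_sum (fun i _ => hr i) (mem_range.mpr hk)

theorem sum_Icc_inv_sum_range_le (N : ℕ) : ∑ k ∈ Icc 1 N, (∑ i ∈ range k, r i)⁻¹ ≤ N := by
  simpa using sum_le_card_nsmul (Icc 1 N) _ 1 fun k hk =>
    inv_le_one_of_one_le₀ (one_le_sum_range h0 hr (mem_Icc.mp hk).1)

theorem sub_le_sum_Icc_inv_sum_range (N : ℕ) :
    N - ∑ i ∈ Ico 1 N, ((N - i : ℕ) : ℝ) * r i ≤ ∑ k ∈ Icc 1 N, (∑ i ∈ range k, r i)⁻¹ := by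
  rcases Nat.eq_zero_or_pos N with rfl | hN
  · simp
  have hsum : ∑ k ∈ Icc 1 N, ∑ i ∈ range k, r i = N + ∑ i ∈ Ico 1 N, ((N - i : ℕ) : ℝ) * r i := by
    rw [sum_Icc_sum_range_eq, range_eq_Ico, sum_eq_sum_Ico_succ_bot hN, h0]
    simp [nsmul_eq_mul]
  calc (N : ℝ) - ∑ i ∈ Ico 1 N, ((N - i : ℕ) : ℝ) * r i
      = ∑ k ∈ Icc 1 N, (2 - ∑ i ∈ range k, r i) := by
        rw [sum_sub_distrib, hsum]; simp only [sum_const, Nat.card_Icc, add_tsub_cancel_right, nsmul_eq_mul]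
        ring
    _ ≤ ∑ k ∈ Icc 1 N, (∑ i ∈ range k, r i)⁻¹ := sum_le_sum fun k hk =>
        two_sub_le_inv (one_pos.trans_le (one_le_sum_range h0 hr (mem_Icc.mp hk).1))

end PartialSums

theorem rfun_zero (ρ : ℝ) (n : ℕ) : rfun ρ n 0 = 1 := by
  simp [rfun]

theorem rfun_le_inv_choose {ρ : ℝ} (hρ : 1 ≤ ρ) (n i : ℕ) :
    rfun ρ n i ≤ ((n - 1).choose i : ℝ)⁻¹ := by
  rcases Nat.eq_zero_or_pos ((n - 1).choose i) with h | h
  · simp [rfun, h]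
  · unfold rfun
    gcongr
    exact le_mul_of_one_le_left (Nat.cast_nonneg _) (one_le_pow₀ hρ)

theorem sub_mul_rfun_le {ρ : ℝ} (hρ : 1 ≤ ρ) {N i : ℕ} (hi : i < N) :
    ((N - i : ℕ) : ℝ) * rfun ρ N i ≤ N / N.choose i := by
  obtain ⟨n, rfl⟩ : ∃ n, N = n + 1 := ⟨N - 1, by omega⟩
  have hpos : 0 < n.choose i := Nat.choose_pos (by omega)
  have hpos_succ : 0 < (n + 1).choose i := Nat.choose_pos (by omega)
  have hchoose_mul : (n.choose i : ℝ) * (n + 1 : ℕ) = (n + 1).choose i * (n + 1 - i : ℕ) := by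
    exact_mod_cast Nat.choose_mul_succ_eq n i
  calc ((n + 1 - i : ℕ) : ℝ) * rfun ρ (n + 1) i ≤ (n + 1 - i : ℕ) * (n.choose i : ℝ)⁻¹ := by
        gcongr
        exact rfun_le_inv_choose hρ (n + 1) i
    _ = (n + 1 : ℕ) / (n + 1).choose i := by
        field_simp
        linarith

theorem EH_eq_sum_inv (ρ : ℝ) (N : ℕ) :
    EH ρ N = ∑ k ∈ Icc 1 N, (∑ i ∈ range k, rfun ρ N i)⁻¹ :=
  sum_congr rfl fun _ hk => if_pos (mem_Icc.mp hk).2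

theorem mean_height_bounds_rho_ge_one (ρ : ℝ) (hρ : 1 ≤ ρ) :
    ∀ᶠ N : ℕ in atTop, (N : ℝ) - 4 ≤ EH ρ N ∧ EH ρ N ≤ (N : ℝ) := by
  have hr := rfun_nonneg (zero_le_one.trans hρ)
  filter_upwards [eventually_ge_atTop 3] with N hN
  rw [EH_eq_sum_inv]
  refine ⟨?_, sum_Icc_inv_sum_range_le (rfun_zero ρ N) (hr N) N⟩
  have hchoose := sum_Ico_inv_choose_le hN
  rw [le_div_iff₀ (by positivity), mul_comm] at hchoose
  calc (N : ℝ) - 4 ≤ N - N * ∑ i ∈ Ico 1 N, (N.choose i : ℝ)⁻¹ := by linarith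
    _ ≤ N - ∑ i ∈ Ico 1 N, ((N - i : ℕ) : ℝ) * rfun ρ N i := by
        rw [mul_sum]
        refine sub_le_sub_left (sum_le_sum fun i hi => ?_) _
        exact div_eq_mul_inv (N : ℝ) _ ▸ sub_mul_rfun_le hρ (mem_Ico.mp hi).2
    _ ≤ _ := sub_le_sum_Icc_inv_sum_range (rfun_zero ρ N) (hr N) N
end

section
/- Let ρ ≥ 1. Then for all sufficiently large N, P(H_N ≥ N−1) ≥ (N−1)/(N+2). -/
open Finset Filter Real Topology

/-! For `ρ ≥ 1` every term `ρ⁻ⁱ C(N-1,i)⁻¹` is at most its value at `ρ = 1`, so the tail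
probabilities are smallest at `ρ = 1`, and with `n = N - 1` it suffices to show
`∑_{i<n} C(n,i)⁻¹ ≤ 1 + 3/n`. The terms `i = 0, 1, n-1` give `1 + 2/n`; the terms `i = 2, n-2`
and the fewer than `n` terms with `3 ≤ i ≤ n-3`, each at most `C(n,3)⁻¹`, give `O(1/n²)`. -/

namespace Nat

theorem choose_le_choose_of_le_of_add_le {n k i : ℕ} (hki : k ≤ i) (hik : i + k ≤ n) :
    n.choose k ≤ n.choose i := by
  rcases le_or_gt i (n / 2) with hi | hi
  · exact choose_le_choose_of_le_of_le_half hki hi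
  · rw [← choose_symm (by omega : i ≤ n)]
    exact choose_le_choose_of_le_of_le_half (by omega) (by omega)

end Nat

theorem sum_range_inv_choose_le {n : ℕ} (hn : 11 ≤ n) :
    ∑ i ∈ range n, (n.choose i : ℝ)⁻¹ ≤ 1 + 3 / n := by
  obtain ⟨m, rfl⟩ : ∃ m, n = m + 6 := ⟨n - 6, by omega⟩
  have hm : (5 : ℝ) ≤ m := by exact_mod_cast (by omega : 5 ≤ m)
  have hc2 : ((m + 6).choose 2 : ℝ) = (m + 6) * (m + 5) / 2 := by
    rw [Nat.cast_choose_two]; push_cast; ring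
  have hc3 : ((m + 6).choose 3 : ℝ) = (m + 6) * (m + 5) * (m + 4) / 6 := by
    have h := Nat.choose_succ_right_eq (m + 6) 2
    rw [show m + 6 - 2 = m + 4 by omega] at h
    have h' : ((m + 6).choose 3 : ℝ) * 3 = (m + 6).choose 2 * (m + 4) := by exact_mod_cast h
    rw [hc2] at h'; linarith
  have hmid : ∑ i ∈ range (m + 1), ((m + 6).choose (i + 1 + 1 + 1) : ℝ)⁻¹ ≤
      (m + 1) * ((m + 6).choose 3 : ℝ)⁻¹ := by
    have hpos : (0 : ℝ) < (m + 6).choose 3 := by exact_mod_cast Nat.choose_pos (by omega)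
    simpa using sum_le_card_nsmul (range (m + 1)) _ _ fun i hi ↦
      inv_anti₀ hpos <| mod_cast Nat.choose_le_choose_of_le_of_add_le (by omega)
        (by simp only [mem_range] at hi; omega)
  -- peel off `i = n-1, n-2` at the top and `i = 0, 1, 2` at the bottom
  rw [sum_range_succ, sum_range_succ, sum_range_succ', sum_range_succ', sum_range_succ',
    Nat.choose_symm_of_eq_add (by omega : m + 6 = m + 4 + 2),
    Nat.choose_symm_of_eq_add (by omega : m + 6 = m + 5 + 1)]
  simp only [zero_add, Nat.choose_zero_right, Nat.choose_one_right, hc2, Nat.cast_one, inv_one]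
  rw [hc3] at hmid
  have key : (m + 1) * ((m + 6) * (m + 5) * (m + 4) / 6 : ℝ)⁻¹ + 2 * ((m + 6) * (m + 5) / 2 : ℝ)⁻¹
      ≤ ((m : ℝ) + 6)⁻¹ := by
    field_simp
    nlinarith
  push_cast
  rw [div_eq_mul_inv (3 : ℝ)]
  linarith

theorem rfun_one (n i : ℕ) : rfun 1 n i = ((n - 1).choose i : ℝ)⁻¹ := by
  simp [rfun]

theorem rfun_one_le_rfun {ρ : ℝ} (hρ : 1 ≤ ρ) (n i : ℕ) : rfun ρ n i ≤ rfun 1 n i := by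
  rw [rfun_one]
  rcases Nat.eq_zero_or_pos ((n - 1).choose i) with h | h
  · simp [rfun, h]
  · exact inv_anti₀ (mod_cast h) (le_mul_of_one_le_left (by positivity) (one_le_pow₀ hρ))

theorem tailP_one_le_tailP {ρ : ℝ} (hρ : 1 ≤ ρ) (N k : ℕ) : tailP 1 N k ≤ tailP ρ N k := by
  unfold tailP
  split_ifs with hkN
  · rcases Nat.eq_zero_or_pos k with rfl | hk
    · simp
    · exact inv_anti₀ (sum_pos (fun i hi ↦ rfun_pos (by linarith) (by rw [mem_range] at hi; omega))
        (nonempty_range_iff.2 hk.ne')) (sum_le_sum fun i _ ↦ rfun_one_le_rfun hρ N i)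
  · exact le_rfl

theorem tailP_one_pred_ge {N : ℕ} (hN : 12 ≤ N) :
    ((N : ℝ) - 1) / (N + 2) ≤ tailP 1 N (N - 1) := by
  obtain ⟨n, rfl⟩ : ∃ n, N = n + 1 := ⟨N - 1, by omega⟩
  have hn : (0 : ℝ) < n := by exact_mod_cast (by omega : 0 < n)
  have hsum : 0 < ∑ i ∈ range n, (n.choose i : ℝ)⁻¹ :=
    sum_pos (fun i hi ↦ by have := Nat.choose_pos (mem_range.1 hi).le; positivity)
      (nonempty_range_iff.2 (by omega))
  simp only [tailP, Nat.add_sub_cancel, rfun_one, Nat.le_succ, if_true]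
  calc ((n + 1 : ℕ) - 1 : ℝ) / ((n + 1 : ℕ) + 2) = (1 + 3 / (n : ℝ))⁻¹ := by
        push_cast; field_simp; ring
    _ ≤ _ := inv_anti₀ hsum (sum_range_inv_choose_le (by omega))

theorem tail_prob_near_top_rho_ge_one (ρ : ℝ) (hρ : 1 ≤ ρ) :
    ∀ᶠ N : ℕ in atTop, tailP ρ N (N - 1) ≥ ((N : ℝ) - 1) / ((N : ℝ) + 2) := by
  filter_upwards [eventually_ge_atTop 12] with N hN
  exact (tailP_one_pred_ge hN).trans (tailP_one_le_tailP hρ N (N - 1))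
end
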